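/- arXiv:2202.10349 — 2 statements merged into one kernel-verified Lean document; each statement's English description precedes it below -/
import Mathlib

section
/- Recursion theorem for Hoare triples: given ψ and φ such that (1) for every ψ' satisfying all contracts of φ, every procedure body ψ(y) satisfies its contract under ψ', and (2) for every ψ', if ψ' satisfies all contracts of φ then ⊨_{ψ'} {P} c {Q}, then ⊨_ψ {P} c {Q} holds. -/
/-- Memory states map addresses to natural-number values. -/
abbrev State := ℕ → ℕ

/-- Pointwise update σ[i/n]. -/
def upd (σ : State) (i n : ℕ) : State := fun j => if j = i then n else σ j

/-- Arithmetic expressions. -/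
inductive Aexp : Type
  | const (n : ℕ)
  | loc (i : ℕ)
  | deref (i : ℕ)
  | addr (i : ℕ)
  | add (a b : Aexp)
  | mul (a b : Aexp)
  | sub (a b : Aexp)

/-- Evaluation of arithmetic expressions (truncated subtraction on ℕ). -/
def evalA : Aexp → State → ℕ
  | .const n, _ => n
  | .loc i, σ => σ i
  | .deref i, σ => σ (σ i)
  | .addr i, _ => i
  | .add a b, σ => evalA a σ + evalA b σ
  | .mul a b, σ => evalA a σ * evalA b σ
  | .sub a b, σ => evalA a σ - evalA b σ

/-- Boolean expressions. -/
inductive Bexp : Type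
  | tt
  | ff
  | le (a b : Aexp)
  | eq (a b : Aexp)
  | and (x y : Bexp)
  | or (x y : Bexp)
  | not (x : Bexp)

/-- Evaluation of Boolean expressions. -/
def evalB : Bexp → State → Bool
  | .tt, _ => true
  | .ff, _ => false
  | .le a b, σ => decide (evalA a σ ≤ evalA b σ)
  | .eq a b, σ => decide (evalA a σ = evalA b σ)
  | .and x y, σ => evalB x σ && evalB y σ
  | .or x y, σ => evalB x σ || evalB y σ
  | .not x, σ => ! evalB x σ

/-- Assertions are predicates on memory states. -/
abbrev Assertion := State → Prop

/-- Procedure names. -/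
abbrev ProcName := ℕ

/-- Commands of the While language with procedures, assertions and aliasing. -/
inductive Com : Type
  | skip
  | assign (i : ℕ) (a : Aexp)
  | assignDeref (i : ℕ) (a : Aexp)
  | seq (c₁ c₂ : Com)
  | assert (P : Assertion)
  | ite (b : Bexp) (c₁ c₂ : Com)
  | while (b : Bexp) (inv : Assertion) (c : Com)
  | call (y : ProcName)

/-- Procedure environments map procedure names to bodies. -/
abbrev ProcEnv := ProcName → Com

/-- A procedure contract: precondition and postcondition. -/
structure Contract where
  pre : Assertion
  post : Assertion

/-- Contract environments. -/
abbrev ContractEnv := ProcName → Contract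

/-- Big-step operational semantics ⟨c, σ⟩ ⇓_ψ σ'. -/
inductive BigStep (ψ : ProcEnv) : Com → State → State → Prop
  | skip {σ} : BigStep ψ .skip σ σ
  | assign {i a σ} : BigStep ψ (.assign i a) σ (upd σ i (evalA a σ))
  | assignDeref {i a σ} : BigStep ψ (.assignDeref i a) σ (upd σ (σ i) (evalA a σ))
  | seq {c₁ c₂ σ σ' σ''} : BigStep ψ c₁ σ σ' → BigStep ψ c₂ σ' σ'' →
      BigStep ψ (.seq c₁ c₂) σ σ''
  | assert {P σ} : BigStep ψ (.assert P) σ σ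
  | iteTrue {b c₁ c₂ σ σ'} : evalB b σ = true → BigStep ψ c₁ σ σ' →
      BigStep ψ (.ite b c₁ c₂) σ σ'
  | iteFalse {b c₁ c₂ σ σ'} : evalB b σ = false → BigStep ψ c₂ σ σ' →
      BigStep ψ (.ite b c₁ c₂) σ σ'
  | whileTrue {b inv c σ σ' σ''} : evalB b σ = true → BigStep ψ c σ σ' →
      BigStep ψ (.while b inv c) σ' σ'' → BigStep ψ (.while b inv c) σ σ''
  | whileFalse {b inv c σ} : evalB b σ = false → BigStep ψ (.while b inv c) σ σ
  | call {y σ σ'} : BigStep ψ (ψ y) σ σ' → BigStep ψ (.call y) σ σ'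

/-- Semantic Hoare triple ⊨_ψ {P} c {Q}. -/
def Hoare (ψ : ProcEnv) (P : Assertion) (c : Com) (Q : Assertion) : Prop :=
  ∀ σ σ', P σ → BigStep ψ c σ σ' → Q σ'

/-- All procedure contracts of φ are valid under ψ. -/
def ContractsValid (ψ : ProcEnv) (φ : ContractEnv) : Prop :=
  ∀ y, Hoare ψ (φ y).pre (.call y) (φ y).post

/-- Main verification-condition generator. -/
def Tc : Com → State → ContractEnv → Assertion → Prop
  | .skip, σ, _, f => ∀ σ', σ' = σ → f σ'
  | .assign i a, σ, _, f => ∀ σ', σ' = upd σ i (evalA a σ) → f σ'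
  | .assignDeref i a, σ, _, f => ∀ σ', σ' = upd σ (σ i) (evalA a σ) → f σ'
  | .seq c₀ c₁, σ, φ, f => Tc c₀ σ φ (fun σ' => Tc c₁ σ' φ f)
  | .assert P, σ, _, f => ∀ σ', σ' = σ ∧ P σ → f σ'
  | .ite b c₀ c₁, σ, φ, f =>
      (evalB b σ = true → Tc c₀ σ φ f) ∧ (¬ evalB b σ = true → Tc c₁ σ φ f)
  | .while b inv _c, σ, _φ, f =>
      inv σ → ∀ σ', inv σ' ∧ ¬ evalB b σ' = true → f σ'
  | .call y, σ, φ, f => (φ y).pre σ → ∀ σ', (φ y).post σ' → f σ'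

/-- Auxiliary verification-condition generator. -/
def Ta : Com → State → ContractEnv → Prop
  | .skip, _, _ => True
  | .assign _ _, _, _ => True
  | .assignDeref _ _, _, _ => True
  | .seq c₀ c₁, σ, φ => Ta c₀ σ φ ∧ Tc c₀ σ φ (fun σ' => Ta c₁ σ' φ)
  | .assert P, σ, _ => P σ
  | .ite b c₀ c₁, σ, φ =>
      (evalB b σ = true → Ta c₀ σ φ) ∧ (¬ evalB b σ = true → Ta c₁ σ φ)
  | .while b inv c, σ, φ =>
      inv σ ∧ (∀ σ', inv σ' ∧ evalB b σ' = true → Ta c σ' φ) ∧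
        (∀ σ', inv σ' ∧ evalB b σ' = true → Tc c σ' φ inv)
  | .call y, σ, φ => (φ y).pre σ

/-- Procedure verification condition. -/
def Tf (φ : ContractEnv) (ψ : ProcEnv) : Prop :=
  ∀ y σ, (φ y).pre σ → Ta (ψ y) σ φ ∧ Tc (ψ y) σ φ (φ y).post

/-- Relational assertions over sequences of memory states. -/
abbrev RAssertion := List State → Prop

/-- Relational VC generator; the head of the list is the last command/state (cₙ, σₙ). -/
def Tr : List Com → List State → ContractEnv → RAssertion → Prop
  | [], [], _, Q => Q []
  | c :: cs, σ :: σs, φ, Q =>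
      Tc c σ φ (fun σ' => Tr cs σs φ (fun σs' => Q (σ' :: σs')))
  | _, _, _, _ => False

/-- Auxiliary relational obligations: conjunction of Ta over all commands. -/
def Tar : List Com → List State → ContractEnv → Prop
  | [], [], _ => True
  | c :: cs, σ :: σs, φ => Ta c σ φ ∧ Tar cs σs φ
  | _, _, _ => False

/-- Pointwise execution of a sequence of commands. -/
def ExecAll (ψ : ProcEnv) : List Com → List State → List State → Prop
  | [], [], [] => True
  | c :: cs, σ :: σs, σ' :: σs' => BigStep ψ c σ σ' ∧ ExecAll ψ cs σs σs'
  | _, _, _ => False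

/-! Every terminating run under `ψ` makes only finitely deep nested calls, so it is already a run
under the environment `ψₙ = approxEnv ψ n` obtained by unfolding each body `n` times and
replacing the calls left at depth `n` by a diverging loop. By (1) and induction on `n`, every `ψₙ`
satisfies the contracts of `φ`; hence so does `ψ`, and (2) applied to `ψ` gives the triple. The
bodies of `ψₙ` are call-free, which makes their runs independent of the environment they are
executed in. -/

namespace Com

def diverge : Com := .while .tt (fun _ => True) .skip

def CallFree : Com → Prop
  | .seq c d => CallFree c ∧ CallFree d
  | .ite _ c d => CallFree c ∧ CallFree d
  | .while _ _ c => CallFree c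
  | .call _ => False
  | _ => True

def substCalls (τ : ProcEnv) : Com → Com
  | .seq c d => .seq (substCalls τ c) (substCalls τ d)
  | .ite b c d => .ite b (substCalls τ c) (substCalls τ d)
  | .while b inv c => .while b inv (substCalls τ c)
  | .call y => τ y
  | c => c

theorem callFree_substCalls {τ : ProcEnv} (hτ : ∀ y, CallFree (τ y)) :
    ∀ c, CallFree (substCalls τ c)
  | .skip | .assign _ _ | .assignDeref _ _ | .assert _ => trivial
  | .seq c d | .ite _ c d => ⟨callFree_substCalls hτ c, callFree_substCalls hτ d⟩
  | .while _ _ c => callFree_substCalls hτ c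
  | .call y => hτ y

end Com

open Com

namespace BigStep

theorem not_diverge {χ : ProcEnv} {σ σ' : State} : ¬ BigStep χ diverge σ σ' := by
  intro h
  generalize hd : diverge = d at h
  induction h with
  | whileTrue _ _ _ _ ih => exact ih hd
  | whileFalse hb => cases hd; simp [evalB] at hb
  | _ => cases hd

theorem of_callFree {χ χ' : ProcEnv} {c : Com} {σ σ' : State} (h : BigStep χ c σ σ')
    (hc : CallFree c) : BigStep χ' c σ σ' := by
  induction h with
  | skip => exact .skip
  | assign => exact .assign
  | assignDeref => exact .assignDeref
  | seq _ _ ih₁ ih₂ => exact .seq (ih₁ hc.1) (ih₂ hc.2)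
  | assert => exact .assert
  | iteTrue hb _ ih => exact .iteTrue hb (ih hc.1)
  | iteFalse hb _ ih => exact .iteFalse hb (ih hc.2)
  | whileTrue hb _ _ ih₁ ih₂ => exact .whileTrue hb (ih₁ hc) (ih₂ hc)
  | whileFalse hb => exact .whileFalse hb
  | call _ _ => exact hc.elim

section substCalls

variable {τ χ : ProcEnv}

theorem substCalls_of (hτ : ∀ y, CallFree (τ y)) {c : Com} {σ σ' : State}
    (h : BigStep τ c σ σ') :
    BigStep χ (substCalls τ c) σ σ' := by
  induction h with
  | skip => exact .skip
  | assign => exact .assign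
  | assignDeref => exact .assignDeref
  | seq _ _ ih₁ ih₂ => exact .seq ih₁ ih₂
  | assert => exact .assert
  | iteTrue hb _ ih => exact .iteTrue hb ih
  | iteFalse hb _ ih => exact .iteFalse hb ih
  | whileTrue hb _ _ ih₁ ih₂ => exact .whileTrue hb ih₁ ih₂
  | whileFalse hb => exact .whileFalse hb
  | @call y _ _ h _ => exact h.of_callFree (hτ y)

theorem of_substCalls (hτ : ∀ y, CallFree (τ y)) : ∀ {c : Com} {σ σ' : State},
    BigStep χ (substCalls τ c) σ σ' → BigStep τ c σ σ'
  | .skip, _, _, h => by cases h; exact .skip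
  | .assign _ _, _, _, h => by cases h; exact .assign
  | .assignDeref _ _, _, _, h => by cases h; exact .assignDeref
  | .assert _, _, _, h => by cases h; exact .assert
  | .seq _ _, _, _, h => by
    cases h with
    | seq h₁ h₂ => exact .seq (of_substCalls hτ h₁) (of_substCalls hτ h₂)
  | .ite _ _ _, _, _, h => by
    cases h with
    | iteTrue hb h => exact .iteTrue hb (of_substCalls hτ h)
    | iteFalse hb h => exact .iteFalse hb (of_substCalls hτ h)
  | .while b inv c, _, _, h => by
    replace h : BigStep χ (.while b inv (substCalls τ c)) _ _ := h
    generalize hw : Com.while b inv (substCalls τ c) = w at h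
    induction h with
    | whileTrue hb h₁ _ _ ih => cases hw; exact .whileTrue hb (of_substCalls hτ h₁) (ih rfl)
    | whileFalse hb => cases hw; exact .whileFalse hb
    | _ => cases hw
  | .call y, _, _, h => .call (h.of_callFree (hτ y))

theorem substCalls_iff (hτ : ∀ y, CallFree (τ y)) {c : Com} {σ σ' : State} :
    BigStep χ (substCalls τ c) σ σ' ↔ BigStep τ c σ σ' :=
  ⟨of_substCalls hτ, substCalls_of hτ⟩

end substCalls

end BigStep

def approxEnv (ψ : ProcEnv) : ℕ → ProcEnv
  | 0 => fun _ => diverge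
  | n + 1 => fun y => substCalls (approxEnv ψ n) (ψ y)

theorem callFree_approxEnv (ψ : ProcEnv) : ∀ n y, CallFree (approxEnv ψ n y)
  | 0, _ => trivial
  | n + 1, y => callFree_substCalls (callFree_approxEnv ψ n) (ψ y)

open Filter in
theorem BigStep.eventually_approxEnv {ψ : ProcEnv} {c : Com} {σ σ' : State}
    (h : BigStep ψ c σ σ') : ∀ᶠ n in atTop, BigStep (approxEnv ψ n) c σ σ' := by
  induction h with
  | skip => exact .of_forall fun _ => .skip
  | assign => exact .of_forall fun _ => .assign
  | assignDeref => exact .of_forall fun _ => .assignDeref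
  | seq _ _ ih₁ ih₂ => exact (ih₁.and ih₂).mono fun _ h => .seq h.1 h.2
  | assert => exact .of_forall fun _ => .assert
  | iteTrue hb _ ih => exact ih.mono fun _ h => .iteTrue hb h
  | iteFalse hb _ ih => exact ih.mono fun _ h => .iteFalse hb h
  | whileTrue hb _ _ ih₁ ih₂ => exact (ih₁.and ih₂).mono fun _ h => .whileTrue hb h.1 h.2
  | whileFalse hb => exact .of_forall fun _ => .whileFalse hb
  | call _ ih =>
    obtain ⟨N, hN⟩ := eventually_atTop.1 ih
    refine eventually_atTop.2 ⟨N + 1, fun m hm => ?_⟩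
    obtain ⟨k, rfl⟩ : ∃ k, m = k + 1 := ⟨m - 1, by omega⟩
    exact .call ((BigStep.substCalls_iff (callFree_approxEnv ψ k)).2 (hN k (by omega)))

section recursion

variable {ψ : ProcEnv} {φ : ContractEnv}

theorem contractsValid_approxEnv
    (hbody : ∀ ψ' : ProcEnv, ContractsValid ψ' φ → ∀ y, Hoare ψ' (φ y).pre (ψ y) (φ y).post) :
    ∀ n, ContractsValid (approxEnv ψ n) φ
  | 0 => fun _ _ _ _ h => by
    cases h with
    | call h => exact h.not_diverge.elim
  | n + 1 => fun y σ σ' hpre h => by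
    cases h with
    | call h =>
      exact hbody _ (contractsValid_approxEnv hbody n) y σ σ' hpre
        ((BigStep.substCalls_iff (callFree_approxEnv ψ n)).1 h)

theorem contractsValid_of_bodies
    (hbody : ∀ ψ' : ProcEnv, ContractsValid ψ' φ → ∀ y, Hoare ψ' (φ y).pre (ψ y) (φ y).post) :
    ContractsValid ψ φ := fun y σ σ' hpre h =>
  have ⟨n, hn⟩ := h.eventually_approxEnv.exists
  contractsValid_approxEnv hbody n y σ σ' hpre hn

end recursion

theorem hoare_recursion (ψ : ProcEnv) (φ : ContractEnv) (P Q : Assertion) (c : Com)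
    (h₁ : ∀ ψ' : ProcEnv, ContractsValid ψ' φ →
      ∀ y, Hoare ψ' (φ y).pre (ψ y) (φ y).post)
    (h₂ : ∀ ψ' : ProcEnv, ContractsValid ψ' φ → Hoare ψ' P c Q) :
    Hoare ψ P c Q :=
  h₂ ψ (contractsValid_of_bodies h₁)
end

section
/- Soundness of the main verification-condition generator Tc under contract assumptions: if for all states σ, P σ implies Ta(c, σ, φ) and P σ implies Tc(c, σ, φ, Q), then for any procedure environment ψ satisfying all contracts of φ, the Hoare triple ⊨_ψ {P} c {Q} holds. -/
/-- Induction on the execution rather than on the command: a loop unfolds into a body run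
followed by a run of the same loop, and a call is discharged by its contract instead of
by the body's own verification conditions. -/
theorem BigStep.post_of_vc {ψ : ProcEnv} {φ : ContractEnv} (hψ : ContractsValid ψ φ)
    {c : Com} {σ σ' : State} (h : BigStep ψ c σ σ') {Q : Assertion}
    (ha : Ta c σ φ) (hc : Tc c σ φ Q) : Q σ' := by
  induction h generalizing Q with
  | skip | assign | assignDeref => exact hc _ rfl
  | assert => exact hc _ ⟨rfl, ha⟩
  | seq _ _ ih₁ ih₂ => exact ih₂ (ih₁ ha.1 ha.2) (ih₁ ha.1 hc)
  | iteTrue hb _ ih => exact ih (ha.1 hb) (hc.1 hb)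
  | iteFalse hb _ ih =>
    have hb' := ne_true_of_eq_false hb
    exact ih (ha.2 hb') (hc.2 hb')
  | whileTrue hb _ _ ihBody ihLoop =>
    obtain ⟨hinv, hbodyTa, hbodyTc⟩ := ha
    have hinv' := ihBody (hbodyTa _ ⟨hinv, hb⟩) (hbodyTc _ ⟨hinv, hb⟩)
    -- the exit condition in `Tc` of a loop does not depend on the entry state
    exact ihLoop ⟨hinv', hbodyTa, hbodyTc⟩ fun _ => hc hinv
  | whileFalse hb => exact hc ha.1 _ ⟨ha.1, ne_true_of_eq_false hb⟩
  | @call y _ _ hbody _ => exact hc ha _ (hψ y _ _ ha (.call hbody))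

theorem vcg_sound_under_contracts (c : Com) (φ : ContractEnv) (P Q : Assertion)
    (hTa : ∀ σ, P σ → Ta c σ φ)
    (hTc : ∀ σ, P σ → Tc c σ φ Q) :
    ∀ ψ : ProcEnv, ContractsValid ψ φ → Hoare ψ P c Q :=
  fun _ hψ σ _ hP hstep => hstep.post_of_vc hψ (hTa σ hP) (hTc σ hP)
end
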